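/- The free infinite magmatic coalgebra Mag^∞(V) is connected: defining F_0 = K·1 and F_r = ∩_{n≥2} {x : Δ̄_n(x) ∈ (F_{r-1})^{⊗n}}, one has F_r Mag^∞(V) = span of labelled trees of height at most r, and Mag^∞(V) = ∪_{r≥0} F_r Mag^∞(V). -/

import Mathlib

open scoped TensorProduct PiTensorProduct

noncomputable section

/-- Planar rooted trees: a leaf, or the grafting of `k + 2` trees onto a new root. -/
inductive PTree : Type
  | leaf : PTree
  | graft : (k : ℕ) → (Fin (k + 2) → PTree) → PTree

namespace PTree

/-- Number of leaves of a planar rooted tree. -/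
@[reducible] noncomputable def leaves (t : PTree) : ℕ :=
  PTree.rec 1 (fun _ _ ih => ∑ i, ih i) t

/-- The `n`-corolla (with `n = k + 2` leaves). -/
def corolla (k : ℕ) : PTree := .graft k fun _ => .leaf

/-- Height of a planar rooted tree: the maximal number of internal vertices on a
path from the root to a leaf (so the leaf `|` has height 0 and the corollas have
height 1). -/
@[reducible] noncomputable def height (t : PTree) : ℕ :=
  PTree.rec 0 (fun _ _ ih => (Finset.univ.sup ih) + 1) t

end PTree

/-- The index in `Fin (n_1 + ⋯ + n_k)` corresponding to the pair `(j, i)` with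
`i : Fin (n j)` (concatenation of blocks, in order). -/
def sigmaIdx {k : ℕ} (n : Fin k → ℕ) (j : Fin k) (i : Fin (n j)) : Fin (∑ j', n j') :=
  ⟨(∑ j' ∈ Finset.univ.filter (fun j' => j' < j), n j') + i.1, by
    have hj : j ∉ Finset.univ.filter (fun j' => j' < j) := by simp
    have h2 : (∑ j' ∈ insert j (Finset.univ.filter (fun j' => j' < j)), n j') ≤ ∑ j', n j' :=
      Finset.sum_le_sum_of_subset (Finset.subset_univ _)
    rw [Finset.sum_insert hj] at h2
    have := i.2
    omega⟩

variable (K : Type*) [Field K]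

/-- The raw data of an "infinite magmatic bialgebra": an `(n+2)`-ary multilinear
operation and an `(n+2)`-ary cooperation for every `n`, together with a unit
element and a counit. -/
structure BOps (H : Type*) [AddCommGroup H] [Module K H] where
  /-- the `(n+2)`-ary operations `μ_{n+2}` -/
  mu : ∀ n : ℕ, MultilinearMap K (fun _ : Fin (n + 2) => H) H
  /-- the common unit of the operations -/
  one : H
  /-- the common counit of the cooperations -/
  counit : H →ₗ[K] K
  /-- the `(n+2)`-ary cooperations `Δ_{n+2}` -/
  Delta : ∀ n : ℕ, H →ₗ[K] ⨂[K] _ : Fin (n + 2), H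

variable {H : Type*} [AddCommGroup H] [Module K H]

/-- The linear map `x ↦ 1^{⊗i} ⊗ x ⊗ 1^{⊗(n-1-i)}` placing `x` in slot `i` and the
unit everywhere else. -/
noncomputable def unitSlot (one : H) {n : ℕ} (i : Fin n) :
    H →ₗ[K] ⨂[K] _ : Fin n, H :=
  (PiTensorProduct.tprod K (s := fun _ : Fin n => H)).toLinearMap (fun _ => one) i

/-- `S` is an infinite magmatic algebra: all operations share the unit, and
inserting the unit in any slot of `μ_{n+1}` yields `μ_n` on the remaining
arguments (with `μ_1 = id` as base case). -/
def IsIMAlg (S : BOps K H) : Prop :=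
  (∀ (x : Fin 2 → H) (i : Fin 2), x i = S.one → S.mu 0 x = x i.rev) ∧
  (∀ (n : ℕ) (x : Fin (n + 3) → H) (i : Fin (n + 3)), x i = S.one →
    S.mu (n + 1) x = S.mu n (fun j => x (i.succAbove j)))

/-- Contraction of the `i`-th tensor factor by a linear functional `c`:
`x_1 ⊗ ⋯ ⊗ x_{n+1} ↦ c(x_i) · (x_1 ⊗ ⋯ x̂_i ⋯ ⊗ x_{n+1})`. -/
noncomputable def ctr (c : H →ₗ[K] K) (n : ℕ) (i : Fin (n + 1)) :
    (⨂[K] _ : Fin (n + 1), H) →ₗ[K] ⨂[K] _ : Fin n, H :=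
  (TensorProduct.lid K _).toLinearMap ∘ₗ
    (TensorProduct.map
      (c ∘ₗ (PiTensorProduct.subsingletonEquiv (0 : Fin 1)).toLinearMap) LinearMap.id) ∘ₗ
    (PiTensorProduct.tmulEquiv K H).symm.toLinearMap ∘ₗ
    (PiTensorProduct.reindex K (fun _ => H)
      ((i.cycleRange).trans ((finCongr (Nat.add_comm n 1)).trans
        finSumFinEquiv.symm))).toLinearMap

/-- `S` is a (co-augmented) infinite magmatic coalgebra: the cooperations share the
counit `c`, contracting any slot of `Δ_{n+1}` by `c` yields `Δ_n` (with
`Δ_1 = id` as base case), and the unit is grouplike for all cooperations. -/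
def IsIMCoalg (S : BOps K H) : Prop :=
  S.counit S.one = 1 ∧
  (∀ n, S.Delta n S.one = PiTensorProduct.tprod K (fun _ => S.one)) ∧
  (∀ i : Fin 2,
    (PiTensorProduct.subsingletonEquiv (0 : Fin 1)).toLinearMap ∘ₗ
      ctr K S.counit 1 i ∘ₗ S.Delta 0 = LinearMap.id) ∧
  (∀ (n : ℕ) (i : Fin (n + 3)), ctr K S.counit (n + 2) i ∘ₗ S.Delta (n + 1) = S.Delta n)

open Classical in
/-- The infinite magmatic compatibility relations between the operations and the
cooperations, for arguments in the augmentation ideal (kernel of the counit). -/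
def IsCompat (S : BOps K H) : Prop :=
  ∀ (n : ℕ) (xs : Fin (n + 2) → H), (∀ i, S.counit (xs i) = 0) →
    (S.Delta n (S.mu n xs) =
      PiTensorProduct.tprod K xs + ∑ i : Fin (n + 2), unitSlot K S.one i (S.mu n xs)) ∧
    (∀ m : ℕ, m < n →
      S.Delta m (S.mu n xs) = ∑ i : Fin (m + 2), unitSlot K S.one i (S.mu n xs)) ∧
    (∀ m : ℕ, n < m →
      S.Delta m (S.mu n xs) =
        (∑ i : Fin (m + 2), unitSlot K S.one i (S.mu n xs)) +
        ∑ f ∈ Finset.univ.filter (fun f : Fin (n + 2) → Fin (m + 2) => StrictMono f),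
          PiTensorProduct.tprod K
            (fun i => if h : ∃ j, f j = i then xs h.choose else S.one))

/-- `σ` is an `(p, r)`-shuffle: a permutation of `Fin (p + r)` which is order
preserving on the first `p` and on the last `r` positions. -/
def IsShuffle (p r : ℕ) (σ : Equiv.Perm (Fin (p + r))) : Prop :=
  (∀ i j : Fin p, i < j → σ (Fin.castAdd r i) < σ (Fin.castAdd r j)) ∧
  (∀ i j : Fin r, i < j → σ (Fin.natAdd p i) < σ (Fin.natAdd p j))

/-- Pad a tensor of arity `m` with `r` copies of the unit on the right and then
permute the `m + r` factors by `σ`; this is the operation `y ↦ σ ∘ (y, 1^{⊗r})`. -/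
noncomputable def padPerm (one : H) (m r : ℕ) (σ : Equiv.Perm (Fin (m + r))) :
    (⨂[K] _ : Fin m, H) →ₗ[K] ⨂[K] _ : Fin (m + r), H :=
  (PiTensorProduct.reindex K (fun _ => H) (σ : Fin (m + r) ≃ Fin (m + r))).toLinearMap ∘ₗ
    (PiTensorProduct.reindex K (fun _ => H) finSumFinEquiv).toLinearMap ∘ₗ
    (PiTensorProduct.tmulEquiv K H).toLinearMap ∘ₗ
    ((TensorProduct.mk K _ _).flip (PiTensorProduct.tprod K (fun _ : Fin r => one)))

open Classical in
/-- The reduced cooperations `Δ̄_{n+2}`, defined recursively by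
`Δ̄_n(x) = Δ_n(x) - Σ_{i+j=n-1} 1^{⊗i} ⊗ x ⊗ 1^{⊗j}
  - Σ_{m=2}^{n-1} Σ_{σ ∈ Sh(m, n-m)} σ ∘ (Δ̄_m(x), 1^{⊗(n-m)})`. -/
noncomputable def rDelta (S : BOps K H) : (n : ℕ) → H →ₗ[K] ⨂[K] _ : Fin (n + 2), H
  | n =>
    S.Delta n - (∑ i : Fin (n + 2), unitSlot K S.one i)
      - ∑ m ∈ (Finset.range n).attach,
          ∑ σ ∈ Finset.univ.filter (IsShuffle (m.1 + 2) (n - m.1)),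
            (PiTensorProduct.reindex K (fun _ => H)
                (finCongr (show (m.1 + 2) + (n - m.1) = n + 2 by
                  have := Finset.mem_range.mp m.2; omega))).toLinearMap ∘ₗ
              padPerm K S.one (m.1 + 2) (n - m.1) σ ∘ₗ rDelta S m.1
  termination_by n => n
  decreasing_by exact Finset.mem_range.mp m.2

/-- The primitive part `Prim H = ∩_{n ≥ 2} ker Δ̄_n`. -/
noncomputable def Prim (S : BOps K H) : Submodule K H :=
  ⨅ n : ℕ, LinearMap.ker (rDelta K S n)

/-- The `n`-th tensor power of a submodule `N ⊆ H`, as a submodule of `H^{⊗n}`. -/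
noncomputable def tpow (N : Submodule K H) (n : ℕ) :
    Submodule K (⨂[K] _ : Fin n, H) :=
  LinearMap.range (PiTensorProduct.map (fun _ : Fin n => N.subtype))

/-- The coradical-type filtration: `F_0 = K·1` and
`F_r = ∩_{n ≥ 2} {x | Δ̄_n(x) ∈ (F_{r-1})^{⊗n}}`. -/
noncomputable def Fil (S : BOps K H) : ℕ → Submodule K H
  | 0 => Submodule.span K {S.one}
  | r + 1 => ⨅ n : ℕ, Submodule.comap (rDelta K S n) (tpow K (Fil S r) (n + 2))

/-- The coalgebra is connected: `H = ∪_r F_r`. -/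
def Connected (S : BOps K H) : Prop := ∀ x : H, ∃ r, x ∈ Fil K S r

/-- `J = Id - u∘c`, the projection onto the augmentation ideal. -/
noncomputable def Jmap (S : BOps K H) : H →ₗ[K] H :=
  LinearMap.id - (LinearMap.toSpanSingleton K H S.one) ∘ₗ S.counit

/-- The `(n+2)`-ary convolution power `⋆_{n+2}(J, …, J) = μ_{n+2} ∘ J^{⊗(n+2)} ∘ Δ_{n+2}`. -/
noncomputable def starJ (S : BOps K H) (n : ℕ) : H →ₗ[K] H :=
  PiTensorProduct.lift (S.mu n) ∘ₗ
    PiTensorProduct.map (fun _ => Jmap K S) ∘ₗ S.Delta n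

/-- The idempotent `e = J - Σ_{n ≥ 2} ⋆_n ∘ J^{⊗n}`; the sum is locally finite by
connectedness. -/
noncomputable def eMap (S : BOps K H) : H → H :=
  fun x => Jmap K S x - ∑ᶠ n : ℕ, starJ K S n x

attribute [local instance] Classical.decEq

/-- A model of the free infinite magmatic algebra `Mag^∞(V)` on the vector space
`V`: for each planar tree `t` a multilinear "labelled tree" map
`ι t : V^{leaves t} → M`, such that the operations are given by grafting of
labelled trees and `M` is freely spanned by the unit together with the labelled
trees (i.e. the canonical map `K ⊕ (⊕_t V^{⊗ leaves t}) → M` is bijective). -/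
structure MagAlgModel (V M : Type*) [AddCommGroup V] [Module K V]
    [AddCommGroup M] [Module K M] (S : BOps K M) where
  /-- the labelled tree `(t; v_1 ⋯ v_n)` -/
  ι : (t : PTree) → MultilinearMap K (fun _ : Fin t.leaves => V) M
  /-- the operations are given by grafting of labelled trees -/
  ι_graft : ∀ (k : ℕ) (ts : Fin (k + 2) → PTree) (v : Fin (PTree.graft k ts).leaves → V),
    S.mu k (fun j => ι (ts j) (fun i => v (sigmaIdx (fun j' => (ts j').leaves) j i))) =
      ι (.graft k ts) v
  /-- `M = K·1 ⊕ (⊕_t V^{⊗ leaves t})` via the labelled trees -/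
  free : Function.Bijective
    (LinearMap.coprod (LinearMap.toSpanSingleton K M S.one)
      (DFinsupp.lsum ℕ (fun t : PTree => PiTensorProduct.lift (ι t))))

/-- The canonical inclusion `V = Mag_1 ⊗ V → Mag^∞(V)`, `v ↦ (|; v)`. -/
noncomputable def leafLin {V M : Type*} [AddCommGroup V] [Module K V]
    [AddCommGroup M] [Module K M] {S : BOps K M} (mod : MagAlgModel K V M S) :
    V →ₗ[K] M :=
  PiTensorProduct.lift (mod.ι .leaf) ∘ₗ
    (PiTensorProduct.subsingletonEquiv (R := K) (s := fun _ => V) (0 : Fin 1)).symm.toLinearMap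

open Classical in
/-- A model of the free infinite magmatic bialgebra `Mag^∞(V)`: a model of the free
algebra whose cooperations are the ungraftings of labelled trees. -/
structure MagModel (V M : Type*) [AddCommGroup V] [Module K V]
    [AddCommGroup M] [Module K M] (S : BOps K M) extends MagAlgModel K V M S where
  counit_one : S.counit S.one = 1
  counit_ι : ∀ (t : PTree) (v : Fin t.leaves → V), S.counit (ι t v) = 0
  delta_one : ∀ n, S.Delta n S.one = PiTensorProduct.tprod K (fun _ => S.one)
  delta_leaf : ∀ (n : ℕ) (v : Fin (PTree.leaf).leaves → V),
    S.Delta n (ι .leaf v) = ∑ i : Fin (n + 2), unitSlot K S.one i (ι .leaf v)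
  delta_graft_eq : ∀ (k : ℕ) (ts : Fin (k + 2) → PTree)
      (v : Fin (PTree.graft k ts).leaves → V),
    S.Delta k (ι (.graft k ts) v) =
      PiTensorProduct.tprod K
        (fun j => ι (ts j) (fun i => v (sigmaIdx (fun j' => (ts j').leaves) j i))) +
      ∑ i : Fin (k + 2), unitSlot K S.one i (ι (.graft k ts) v)
  delta_graft_lt : ∀ (m k : ℕ) (ts : Fin (k + 2) → PTree)
      (v : Fin (PTree.graft k ts).leaves → V), m < k →
    S.Delta m (ι (.graft k ts) v) =
      ∑ i : Fin (m + 2), unitSlot K S.one i (ι (.graft k ts) v)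
  delta_graft_gt : ∀ (m k : ℕ) (ts : Fin (k + 2) → PTree)
      (v : Fin (PTree.graft k ts).leaves → V), k < m →
    S.Delta m (ι (.graft k ts) v) =
      (∑ i : Fin (m + 2), unitSlot K S.one i (ι (.graft k ts) v)) +
      ∑ f ∈ Finset.univ.filter (fun f : Fin (k + 2) → Fin (m + 2) => StrictMono f),
        PiTensorProduct.tprod K (fun i =>
          if h : ∃ j, f j = i then
            ι (ts h.choose) (fun i' => v (sigmaIdx (fun j' => (ts j').leaves) h.choose i'))
          else S.one)
section Shuffle

variable {p r' : ℕ}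

/-- The permutation of `Fin (p + r')` associated to a strictly monotone
`f : Fin p → Fin (p + r')`: send the first block to the image of `f` and the
second block increasingly onto the complement. -/
noncomputable def mkShuffle (f : Fin p → Fin (p + r')) (hf : Function.Injective f) :
    Fin (p + r') → Fin (p + r') :=
  Fin.addCases f ((Finset.univ.image f)ᶜ.orderEmbOfFin (by
    rw [Finset.card_compl, Finset.card_image_of_injective _ hf]
    simp))

lemma mkShuffle_left (f : Fin p → Fin (p + r')) (hf : Function.Injective f) (i : Fin p) :
    mkShuffle f hf (Fin.castAdd r' i) = f i := by
  simp [mkShuffle]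

lemma mkShuffle_right_mem (f : Fin p → Fin (p + r')) (hf : Function.Injective f) (j : Fin r') :
    mkShuffle f hf (Fin.natAdd p j) ∈ (Finset.univ.image f)ᶜ := by
  simp only [mkShuffle, Fin.addCases_right]
  exact Finset.orderEmbOfFin_mem _ _ _

lemma mkShuffle_injective (f : Fin p → Fin (p + r')) (hf : Function.Injective f) :
    Function.Injective (mkShuffle f hf) := by
  intro a b hab
  induction a using Fin.addCases with
  | left i =>
    induction b using Fin.addCases with
    | left i' =>
      rw [mkShuffle_left, mkShuffle_left] at hab
      exact congrArg _ (hf hab)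
    | right j' =>
      exfalso
      have h2 := mkShuffle_right_mem f hf j'
      rw [← hab, mkShuffle_left] at h2
      simp at h2
  | right j =>
    induction b using Fin.addCases with
    | left i' =>
      exfalso
      have h2 := mkShuffle_right_mem f hf j
      rw [hab, mkShuffle_left] at h2
      simp at h2
    | right j' =>
      simp only [mkShuffle, Fin.addCases_right] at hab
      exact congrArg _ ((Finset.orderEmbOfFin _ _).injective hab)

/-- `mkShuffle` as a permutation. -/
noncomputable def mkShufflePerm (f : Fin p → Fin (p + r')) (hf : Function.Injective f) :
    Equiv.Perm (Fin (p + r')) :=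
  Equiv.ofBijective _ ((Finite.injective_iff_bijective).mp (mkShuffle_injective f hf))

lemma mkShufflePerm_apply (f : Fin p → Fin (p + r')) (hf : Function.Injective f) (a) :
    mkShufflePerm f hf a = mkShuffle f hf a := rfl

end Shuffle
section Shuffle2

variable {p r' : ℕ}

lemma isShuffle_mkShufflePerm (f : Fin p → Fin (p + r')) (hf : StrictMono f) :
    IsShuffle p r' (mkShufflePerm f hf.injective) := by
  constructor
  · intro i j hij
    rw [mkShufflePerm_apply, mkShufflePerm_apply, mkShuffle_left, mkShuffle_left]
    exact hf hij
  · intro i j hij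
    rw [mkShufflePerm_apply, mkShufflePerm_apply]
    simp only [mkShuffle, Fin.addCases_right]
    exact (Finset.orderEmbOfFin _ _).strictMono hij

lemma shuffle_strictMono_castAdd {σ : Equiv.Perm (Fin (p + r'))} (hσ : IsShuffle p r' σ) :
    StrictMono (fun i : Fin p => σ (Fin.castAdd r' i)) := fun _ _ h => hσ.1 _ _ h

lemma shuffle_eq_mkShufflePerm {σ : Equiv.Perm (Fin (p + r'))} (hσ : IsShuffle p r' σ) :
    σ = mkShufflePerm (fun i : Fin p => σ (Fin.castAdd r' i))
      (shuffle_strictMono_castAdd hσ).injective := by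
  have hcompl : ∀ j : Fin r', σ (Fin.natAdd p j) ∈
      (Finset.univ.image (fun i : Fin p => σ (Fin.castAdd r' i)))ᶜ := by
    intro j
    simp only [Finset.mem_compl, Finset.mem_image, Finset.mem_univ, true_and, not_exists]
    intro i hi
    have := σ.injective hi
    have h1 : (Fin.castAdd r' i : Fin (p + r')).1 = i.1 := rfl
    have h2 : (Fin.natAdd p j : Fin (p + r')).1 = p + j.1 := rfl
    rw [this] at h1
    omega
  have hmono : StrictMono (fun j : Fin r' => σ (Fin.natAdd p j)) := fun _ _ h => hσ.2 _ _ h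
  have hcard : ((Finset.univ.image (fun i : Fin p => σ (Fin.castAdd r' i)))ᶜ).card = r' := by
    rw [Finset.card_compl,
      Finset.card_image_of_injective _ (shuffle_strictMono_castAdd hσ).injective]
    simp
  have huniq := Finset.orderEmbOfFin_unique hcard hcompl hmono
  ext a
  rw [mkShufflePerm_apply]
  induction a using Fin.addCases with
  | left i => rw [mkShuffle_left]
  | right j =>
    simp only [mkShuffle, Fin.addCases_right]
    exact congrArg Fin.val (congrFun huniq j)

end Shuffle2
section Shuffle3

variable {K : Type*} [Field K] {M : Type*} [AddCommGroup M] [Module K M]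

lemma padPerm_tprod (one : M) (m r : ℕ) (σ : Equiv.Perm (Fin (m + r))) (x : Fin m → M) :
    padPerm K one m r σ (PiTensorProduct.tprod K x) =
      PiTensorProduct.tprod K
        (fun i => Sum.elim x (fun _ : Fin r => one) (finSumFinEquiv.symm (σ.symm i))) := by
  simp only [padPerm, LinearMap.coe_comp, Function.comp_apply, LinearMap.flip_apply,
    TensorProduct.mk_apply, LinearEquiv.coe_coe]
  rw [PiTensorProduct.tmulEquiv_apply, PiTensorProduct.reindex_tprod,
    PiTensorProduct.reindex_tprod]

lemma strictMono_finCongr {m n : ℕ} (h : m = n) : StrictMono (finCongr h) :=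
  fun _ _ hab => hab

lemma mkShufflePerm_congr {p r' : ℕ} (f g : Fin p → Fin (p + r'))
    (hf : Function.Injective f) (h : f = g) :
    mkShufflePerm f hf = mkShufflePerm g (h ▸ hf) := by subst h; rfl

open Classical in
lemma shuffle_sum_eq (one : M) (p r' m : ℕ) (hE : (p + 2) + r' = m + 2) (x : Fin (p + 2) → M) :
    ∑ σ ∈ Finset.univ.filter (IsShuffle (p + 2) r'),
      (PiTensorProduct.reindex K (fun _ => M) (finCongr hE)).toLinearMap
        (padPerm K one (p + 2) r' σ (PiTensorProduct.tprod K x)) =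
    ∑ f ∈ Finset.univ.filter (fun f : Fin (p + 2) → Fin (m + 2) => StrictMono f),
      PiTensorProduct.tprod K (fun i => if h : ∃ j, f j = i then x h.choose else one) := by
  refine Finset.sum_bij'
    (i := fun σ _ => fun i : Fin (p + 2) => finCongr hE (σ (Fin.castAdd r' i)))
    (j := fun f hf => mkShufflePerm (fun i => finCongr hE.symm (f i))
      (((strictMono_finCongr hE.symm).comp
        (Finset.mem_filter.mp hf).2).injective))
    (hi := ?_) (hj := ?_) (left_neg := ?_) (right_neg := ?_) (h := ?_)
  · intro σ hσ
    simp only [Finset.mem_filter, Finset.mem_univ, true_and] at hσ ⊢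
    exact (strictMono_finCongr hE).comp (shuffle_strictMono_castAdd hσ)
  · intro f hf
    simp only [Finset.mem_filter, Finset.mem_univ, true_and] at hf ⊢
    exact isShuffle_mkShufflePerm _ ((strictMono_finCongr hE.symm).comp hf)
  · intro σ hσ
    simp only [Finset.mem_filter, Finset.mem_univ, true_and] at hσ
    dsimp only
    rw [mkShufflePerm_congr _ (fun i : Fin (p + 2) => σ (Fin.castAdd r' i)) _
      (by funext i; exact Fin.ext rfl)]
    exact (shuffle_eq_mkShufflePerm hσ).symm
  · intro f hf
    funext i
    rw [mkShufflePerm_apply, mkShuffle_left]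
    exact Fin.ext rfl
  · intro σ hσmem
    have hσ := (Finset.mem_filter.mp hσmem).2
    dsimp only
    rw [padPerm_tprod]
    simp only [LinearEquiv.coe_coe, PiTensorProduct.reindex_tprod, finCongr_symm]
    congr 1
    funext i
    have hinj : Function.Injective
        (fun j : Fin (p + 2) => finCongr hE (σ (Fin.castAdd r' j))) :=
      ((strictMono_finCongr hE).comp (shuffle_strictMono_castAdd hσ)).injective
    cases hsz : finSumFinEquiv.symm (σ.symm (finCongr hE.symm i)) with
    | inl a =>
      have hz : σ.symm (finCongr hE.symm i) = Fin.castAdd r' a := by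
        have := (Equiv.symm_apply_eq finSumFinEquiv).mp hsz
        simpa using this
      have hσa : finCongr hE (σ (Fin.castAdd r' a)) = i := by
        rw [← hz, Equiv.apply_symm_apply]
        exact Fin.ext rfl
      have hmem : ∃ j, finCongr hE (σ (Fin.castAdd r' j)) = i := ⟨a, hσa⟩
      rw [dif_pos hmem, Sum.elim_inl]
      have hca : hmem.choose = a := hinj (hmem.choose_spec.trans hσa.symm)
      rw [hca]
    | inr b =>
      have hz : σ.symm (finCongr hE.symm i) = Fin.natAdd (p + 2) b := by
        have := (Equiv.symm_apply_eq finSumFinEquiv).mp hsz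
        simpa using this
      rw [Sum.elim_inr]
      rw [dif_neg]
      rintro ⟨j, hj⟩
      have h1 : σ (Fin.castAdd r' j) = finCongr hE.symm i := by
        have : (finCongr hE).symm (finCongr hE (σ (Fin.castAdd r' j))) = (finCongr hE).symm i :=
          congrArg _ hj
        simpa using this
      have h2 : Fin.castAdd r' j = Fin.natAdd (p + 2) b := by
        apply σ.injective
        rw [h1, ← hz, Equiv.apply_symm_apply]
      have h3 : (Fin.castAdd r' j : Fin ((p + 2) + r')).1 = j.1 := rfl
      have h4 : (Fin.natAdd (p + 2) b : Fin ((p + 2) + r')).1 = (p + 2) + b.1 := rfl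
      rw [h2] at h3
      have := j.2
      omega

end Shuffle3
section LemA

variable {K : Type*} [Field K] {M : Type*} [AddCommGroup M] [Module K M]

lemma strictMono_fin_id {a : ℕ} (f : Fin a → Fin a) (hf : StrictMono f) : f = id := by
  have h1 := Finset.orderEmbOfFin_unique (f := f)
    (Finset.card_fin a) (fun x => Finset.mem_univ _) hf
  have h2 := Finset.orderEmbOfFin_unique (f := (id : Fin a → Fin a))
    (Finset.card_fin a) (fun x => Finset.mem_univ _) strictMono_id
  rw [h1, ← h2]

lemma unitSlot_apply (one : M) {n : ℕ} (i : Fin n) (x : M) :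
    unitSlot K one i x = PiTensorProduct.tprod K (Function.update (fun _ => one) i x) := rfl

omit [AddCommGroup M] in
lemma sum_elim_const {a b : ℕ} (one : M) (s : Fin a ⊕ Fin b) :
    Sum.elim (fun _ : Fin a => one) (fun _ : Fin b => one) s = one := by
  cases s <;> rfl

lemma rDelta_one (S : BOps K M)
    (h1 : ∀ n, S.Delta n S.one = PiTensorProduct.tprod K (fun _ => S.one)) (n : ℕ) :
    rDelta K S n S.one ∈
      Submodule.span K {PiTensorProduct.tprod K (fun _ : Fin (n + 2) => S.one)} := by
  induction n using Nat.strong_induction_on with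
  | _ n IH =>
    rw [rDelta]
    simp only [LinearMap.sub_apply, LinearMap.sum_apply, LinearMap.coe_comp,
      Function.comp_apply, LinearEquiv.coe_coe]
    refine sub_mem (sub_mem ?_ ?_) ?_
    · rw [h1]
      exact Submodule.mem_span_singleton_self _
    · refine Submodule.sum_mem _ fun i _ => ?_
      rw [unitSlot_apply, Function.update_eq_self]
      exact Submodule.mem_span_singleton_self _
    · refine Submodule.sum_mem _ fun m _ => Submodule.sum_mem _ fun σ _ => ?_
      obtain ⟨c, hc⟩ := Submodule.mem_span_singleton.mp (IH m.1 (Finset.mem_range.mp m.2))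
      rw [← hc, map_smul, map_smul, padPerm_tprod, PiTensorProduct.reindex_tprod]
      refine Submodule.smul_mem _ _ ?_
      have : (fun i => Sum.elim (fun _ : Fin (m.1 + 2) => S.one)
          (fun _ : Fin (n - m.1) => S.one) (finSumFinEquiv.symm (σ.symm ((finCongr
            (show (m.1 + 2) + (n - m.1) = n + 2 by
              have := Finset.mem_range.mp m.2; omega)).symm i)))) =
          (fun _ : Fin (n + 2) => S.one) := by
        funext i
        exact sum_elim_const S.one _
      rw [this]
      exact Submodule.mem_span_singleton_self _

end LemA
section LemBC

variable {K : Type*} [Field K] {V M : Type*} [AddCommGroup V] [Module K V]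
  [AddCommGroup M] [Module K M] {S : BOps K M}

lemma rDelta_leaf (mod : MagModel K V M S) (n : ℕ) (v : Fin (PTree.leaf).leaves → V) :
    rDelta K S n (mod.ι .leaf v) = 0 := by
  induction n using Nat.strong_induction_on with
  | _ n IH =>
    rw [rDelta]
    simp only [LinearMap.sub_apply, LinearMap.sum_apply, LinearMap.coe_comp,
      Function.comp_apply]
    rw [mod.delta_leaf n v]
    rw [sub_eq_zero_of_eq rfl, zero_sub, neg_eq_zero]
    refine Finset.sum_eq_zero fun m _ => Finset.sum_eq_zero fun σ _ => ?_
    rw [IH m.1 (Finset.mem_range.mp m.2), map_zero, map_zero]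

lemma rDelta_graft (mod : MagModel K V M S) (k : ℕ) (ts : Fin (k + 2) → PTree)
    (v : Fin (PTree.graft k ts).leaves → V) (m : ℕ) :
    (m ≠ k → rDelta K S m (mod.ι (.graft k ts) v) = 0) ∧
    (m = k → rDelta K S k (mod.ι (.graft k ts) v) =
      PiTensorProduct.tprod K (fun j => mod.ι (ts j)
        (fun i => v (sigmaIdx (fun j' => (ts j').leaves) j i)))) := by
  classical
  set x := mod.ι (.graft k ts) v with hx
  set xs : Fin (k + 2) → M := fun j => mod.ι (ts j)
      (fun i => v (sigmaIdx (fun j' => (ts j').leaves) j i)) with hxs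
  induction m using Nat.strong_induction_on with
  | _ m IH =>
    have hz : ∀ m' < m, m' ≠ k → rDelta K S m' x = 0 := fun m' hm hne => (IH m' hm).1 hne
    constructor
    · intro hne
      rcases lt_trichotomy m k with hlt | heq | hgt
      · rw [rDelta]
        simp only [LinearMap.sub_apply, LinearMap.sum_apply, LinearMap.coe_comp,
          Function.comp_apply]
        rw [mod.delta_graft_lt m k ts v hlt]
        rw [sub_eq_zero_of_eq rfl, zero_sub, neg_eq_zero]
        refine Finset.sum_eq_zero fun m' _ => Finset.sum_eq_zero fun σ _ => ?_
        rw [hz m'.1 (Finset.mem_range.mp m'.2)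
          (by have h2 := Finset.mem_range.mp m'.2; omega), map_zero, map_zero]
      · exact absurd heq hne
      · rw [rDelta]
        simp only [LinearMap.sub_apply, LinearMap.sum_apply, LinearMap.coe_comp,
          Function.comp_apply]
        rw [mod.delta_graft_gt m k ts v hgt]
        have hk : (⟨k, Finset.mem_range.mpr hgt⟩ : {y // y ∈ Finset.range m}) ∈
            (Finset.range m).attach := Finset.mem_attach _ _
        rw [Finset.sum_eq_single_of_mem _ hk (fun b _ hb => ?_)]
        · have hrk : rDelta K S k x = PiTensorProduct.tprod K xs :=
            (IH k hgt).2 rfl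
          rw [hrk, shuffle_sum_eq]
          abel
        · refine Finset.sum_eq_zero fun σ _ => ?_
          have hbk : b.1 ≠ k := fun h => hb (Subtype.ext h)
          rw [hz b.1 (Finset.mem_range.mp b.2) hbk, map_zero, map_zero]
    · intro heq
      subst heq
      rw [rDelta]
      simp only [LinearMap.sub_apply, LinearMap.sum_apply, LinearMap.coe_comp,
        Function.comp_apply]
      rw [mod.delta_graft_eq m ts v]
      have h0 : ∀ m' ∈ (Finset.range m).attach, (∑ σ ∈ Finset.univ.filter
          (IsShuffle (m'.1 + 2) (m - m'.1)),
          ((PiTensorProduct.reindex K (fun _ => M)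
            (finCongr (show (m'.1 + 2) + (m - m'.1) = m + 2 by
              have := Finset.mem_range.mp m'.2; omega))).toLinearMap
            (padPerm K S.one (m'.1 + 2) (m - m'.1) σ (rDelta K S m'.1 x)))) = 0 := by
        intro m' _
        refine Finset.sum_eq_zero fun σ _ => ?_
        rw [hz m'.1 (Finset.mem_range.mp m'.2) (by have := Finset.mem_range.mp m'.2; omega),
          map_zero, map_zero]
      rw [Finset.sum_congr rfl h0]
      simp
      exact add_sub_cancel_right _ _

end LemBC
section ModelAPI

variable {K : Type*} [Field K] {V M : Type*} [AddCommGroup V] [Module K V]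
  [AddCommGroup M] [Module K M] {S : BOps K M}

/-- The free presentation of the model, as a linear equivalence. -/
noncomputable def modEquiv (mod : MagModel K V M S) :
    (K × Π₀ t : PTree, ⨂[K] _ : Fin t.leaves, V) ≃ₗ[K] M :=
  LinearEquiv.ofBijective _ mod.free

lemma modEquiv_apply (mod : MagModel K V M S) (c : K)
    (w : Π₀ t : PTree, ⨂[K] _ : Fin t.leaves, V) :
    modEquiv mod (c, w) = c • S.one +
      DFinsupp.lsum ℕ (fun t : PTree => PiTensorProduct.lift (mod.ι t)) w := by
  simp [modEquiv, LinearEquiv.ofBijective, LinearMap.coprod_apply,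
    LinearMap.toSpanSingleton_apply]

lemma modEquiv_one (mod : MagModel K V M S) : modEquiv mod (1, 0) = S.one := by
  rw [modEquiv_apply]; simp

lemma modEquiv_single (mod : MagModel K V M S) (t : PTree)
    (w : ⨂[K] _ : Fin t.leaves, V) :
    modEquiv mod (0, DFinsupp.single t w) = PiTensorProduct.lift (mod.ι t) w := by
  rw [modEquiv_apply]
  simp [DFinsupp.lsum_single]

/-- Projection onto the `t`-component. -/
noncomputable def pProj (mod : MagModel K V M S) (t : PTree) :
    M →ₗ[K] ⨂[K] _ : Fin t.leaves, V :=
  DFinsupp.lapply t ∘ₗ LinearMap.snd K _ _ ∘ₗ (modEquiv mod).symm.toLinearMap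

/-- Idempotent associated to the `t`-component. -/
noncomputable def qProj (mod : MagModel K V M S) (t : PTree) : M →ₗ[K] M :=
  PiTensorProduct.lift (mod.ι t) ∘ₗ pProj mod t

lemma pProj_one (mod : MagModel K V M S) (t : PTree) : pProj mod t S.one = 0 := by
  have h := modEquiv_one mod
  simp [pProj, ← h, LinearEquiv.symm_apply_apply]

lemma pProj_lift (mod : MagModel K V M S) (t t' : PTree) (w : ⨂[K] _ : Fin t'.leaves, V) :
    pProj mod t (PiTensorProduct.lift (mod.ι t') w) =
      (DFinsupp.single t' w : Π₀ t : PTree, ⨂[K] _ : Fin t.leaves, V) t := by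
  have h := modEquiv_single mod t' w
  simp [pProj, ← h, LinearEquiv.symm_apply_apply]

lemma qProj_one (mod : MagModel K V M S) (t : PTree) : qProj mod t S.one = 0 := by
  simp [qProj, pProj_one]

lemma qProj_lift_self (mod : MagModel K V M S) (t : PTree) (w : ⨂[K] _ : Fin t.leaves, V) :
    qProj mod t (PiTensorProduct.lift (mod.ι t) w) = PiTensorProduct.lift (mod.ι t) w := by
  simp [qProj, pProj_lift]

lemma qProj_lift_ne (mod : MagModel K V M S) {t t' : PTree} (h : t ≠ t')
    (w : ⨂[K] _ : Fin t'.leaves, V) :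
    qProj mod t (PiTensorProduct.lift (mod.ι t') w) = 0 := by
  simp [qProj, pProj_lift, DFinsupp.single_eq_of_ne (Ne.symm h), Ne.symm h]

lemma qProj_ι_self (mod : MagModel K V M S) (t : PTree) (v : Fin t.leaves → V) :
    qProj mod t (mod.ι t v) = mod.ι t v := by
  have := qProj_lift_self mod t (PiTensorProduct.tprod K v)
  rwa [PiTensorProduct.lift.tprod] at this

lemma qProj_ι_ne (mod : MagModel K V M S) {t t' : PTree} (h : t ≠ t')
    (v : Fin t'.leaves → V) : qProj mod t (mod.ι t' v) = 0 := by
  have := qProj_lift_ne mod h (PiTensorProduct.tprod K v)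
  rwa [PiTensorProduct.lift.tprod] at this

lemma lift_ι_injective (mod : MagModel K V M S) (t : PTree) :
    Function.Injective (PiTensorProduct.lift (mod.ι t)) := by
  intro a b hab
  have : modEquiv mod (0, DFinsupp.single t a) = modEquiv mod (0, DFinsupp.single t b) := by
    rw [modEquiv_single, modEquiv_single, hab]
  have h2 := (modEquiv mod).injective this
  have h3 : (DFinsupp.single t a : Π₀ t : PTree, ⨂[K] _ : Fin t.leaves, V) =
      DFinsupp.single t b := congrArg Prod.snd h2
  have h4 := congrFun (congrArg DFunLike.coe h3) t
  simpa using h4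

end ModelAPI
section Util

variable {K : Type*} [Field K] {M : Type*} [AddCommGroup M] [Module K M]

lemma ptmap_eq_zero {n : ℕ} {s : Fin n → Type*} [∀ i, AddCommGroup (s i)]
    [∀ i, Module K (s i)] (g : Π i, s i →ₗ[K] M) (j0 : Fin n) (h : g j0 = 0) :
    PiTensorProduct.map g = 0 := by
  apply PiTensorProduct.ext
  apply MultilinearMap.ext
  intro f
  simp only [LinearMap.compMultilinearMap_apply, PiTensorProduct.map_tprod,
    LinearMap.zero_apply, MultilinearMap.zero_apply]
  exact MultilinearMap.map_coord_zero _ j0 (by rw [h]; rfl)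

lemma mem_tpow_map_zero {n : ℕ} {N : Submodule K M} {z : ⨂[K] _ : Fin n, M}
    (hz : z ∈ tpow K N n) (g : Fin n → (M →ₗ[K] M)) (j0 : Fin n)
    (hg : g j0 ∘ₗ N.subtype = 0) : PiTensorProduct.map g z = 0 := by
  obtain ⟨y, rfl⟩ := hz
  rw [← LinearMap.comp_apply, ← PiTensorProduct.map_comp]
  rw [ptmap_eq_zero (fun i => g i ∘ₗ N.subtype) j0 hg]
  rfl

lemma tprod_mem_tpow {n : ℕ} {N : Submodule K M} {y : Fin n → M} (h : ∀ j, y j ∈ N) :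
    PiTensorProduct.tprod K y ∈ tpow K N n :=
  ⟨PiTensorProduct.tprod K (fun j => (⟨y j, h j⟩ : N)), by
    rw [PiTensorProduct.map_tprod]; rfl⟩

lemma tprod_eq_zero {n : ℕ} {y : Fin n → M} (j0 : Fin n) (h : y j0 = 0) :
    PiTensorProduct.tprod K y = 0 :=
  MultilinearMap.map_coord_zero _ j0 h

lemma mem_Fil_succ_iff {S : BOps K M} {r : ℕ} {x : M} :
    x ∈ Fil K S (r + 1) ↔ ∀ n, rDelta K S n x ∈ tpow K (Fil K S r) (n + 2) := by
  rw [Fil]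
  simp [Submodule.mem_iInf, Submodule.mem_comap]

lemma Fil_zero {S : BOps K M} : Fil K S 0 = Submodule.span K {S.one} := by rw [Fil]

end Util

section HeightLemmas

lemma PTree.height_leaf : (PTree.leaf).height = 0 := rfl

lemma PTree.height_graft (k : ℕ) (ts : Fin (k + 2) → PTree) :
    (PTree.graft k ts).height = (Finset.univ.sup fun j => (ts j).height) + 1 := rfl

end HeightLemmas

/-- The free infinite magmatic coalgebra `Mag^∞(V)` is connected:
the filtration `F_0 = K·1`, `F_r = ∩_{n≥2} {x | Δ̄_n(x) ∈ (F_{r-1})^{⊗n}}`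
satisfies `F_r = K·1 ⊕ span of labelled trees with at most r levels` (i.e. with
`height < r`, the leaf having height `0` and the corollas height `1`), and
`Mag^∞(V) = ∪_{r ≥ 0} F_r`. -/
theorem magModel_connected (V M : Type*) [AddCommGroup V] [Module K V]
    [AddCommGroup M] [Module K M] (S : BOps K M) (mod : MagModel K V M S) :
    (∀ r : ℕ, Fil K S r =
      Submodule.span K {S.one} ⊔
        Submodule.span K {m : M | ∃ (t : PTree) (v : Fin t.leaves → V),
          t.height < r ∧ m = mod.ι t v}) ∧
    (⨆ r : ℕ, Fil K S r) = ⊤ := by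
  classical
  have lift_mem : ∀ (t : PTree) (r : ℕ), t.height < r →
      ∀ w : ⨂[K] _ : Fin t.leaves, V,
      PiTensorProduct.lift (mod.ι t) w ∈ Submodule.span K
        {m : M | ∃ (t' : PTree) (v : Fin t'.leaves → V),
          t'.height < r ∧ m = mod.ι t' v} := by
    intro t r htr w
    induction w using PiTensorProduct.induction_on with
    | smul_tprod c f =>
      rw [map_smul, PiTensorProduct.lift.tprod]
      exact Submodule.smul_mem _ _ (Submodule.subset_span ⟨t, f, htr, rfl⟩)
    | add a b ha hb => rw [map_add]; exact add_mem ha hb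
  have decomp : ∀ x : M, ∃ (c : K) (w : Π₀ t : PTree, ⨂[K] _ : Fin t.leaves, V),
      x = c • S.one + ∑ t ∈ w.support, PiTensorProduct.lift (mod.ι t) (w t) := by
    intro x
    refine ⟨((modEquiv mod).symm x).1, ((modEquiv mod).symm x).2, ?_⟩
    have h1 : modEquiv mod (((modEquiv mod).symm x).1, ((modEquiv mod).symm x).2) = x := by
      rw [Prod.mk.eta]; exact (modEquiv mod).apply_symm_apply x
    conv_lhs => rw [← h1, modEquiv_apply]
    congr 1
    rw [DFinsupp.lsum_apply_apply, DFinsupp.sumAddHom_apply]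
    rfl
  have part1 : ∀ r : ℕ, Fil K S r =
      Submodule.span K {S.one} ⊔
        Submodule.span K {m : M | ∃ (t : PTree) (v : Fin t.leaves → V),
          t.height < r ∧ m = mod.ι t v} := by
    intro r
    induction r with
    | zero =>
      rw [Fil_zero]
      have hempty : {m : M | ∃ (t : PTree) (v : Fin t.leaves → V),
          t.height < 0 ∧ m = mod.ι t v} = (∅ : Set M) := by
        ext y; simp
      rw [hempty, Submodule.span_empty, sup_bot_eq]
    | succ r IH =>
      apply le_antisymm
      · -- hard direction: Fil (r+1) ≤ span
        intro x hx
        obtain ⟨c, w, hxw⟩ := decomp x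
        have hw0 : ∀ t : PTree, r + 1 ≤ t.height → w t = 0 := by
          intro t ht
          cases t with
          | leaf => rw [PTree.height_leaf] at ht; omega
          | graft k ts =>
            by_cases hsupp : w (PTree.graft k ts) = 0
            · exact hsupp
            exfalso
            obtain ⟨j0, -, hj0⟩ := Finset.exists_mem_eq_sup Finset.univ
              Finset.univ_nonempty (fun j => (ts j).height)
            have hj0r : r ≤ (ts j0).height := by
              rw [PTree.height_graft] at ht; omega
            have hN : qProj mod (ts j0) ∘ₗ (Fil K S r).subtype = 0 := by
              apply LinearMap.ext
              rintro ⟨y, hy⟩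
              simp only [LinearMap.comp_apply, Submodule.coe_subtype, LinearMap.zero_apply]
              rw [IH, ← Submodule.span_union] at hy
              induction hy using Submodule.span_induction with
              | mem y hmem =>
                rcases hmem with h1 | ⟨t', v', ht', rfl⟩
                · rw [Set.mem_singleton_iff] at h1; rw [h1]; exact qProj_one mod _
                · refine qProj_ι_ne mod (fun he => ?_) v'
                  rw [← he] at ht'; omega
              | zero => exact map_zero _
              | add a b _ _ ha hb => rw [map_add, ha, hb, add_zero]
              | smul a y _ hy' => rw [map_smul, hy', smul_zero]
            have hD := mem_Fil_succ_iff.mp hx k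
            have h0 : PiTensorProduct.map (fun j : Fin (k + 2) => qProj mod (ts j))
                (rDelta K S k x) = 0 := mem_tpow_map_zero hD _ j0 hN
            set F : M →ₗ[K] M := PiTensorProduct.lift (S.mu k) ∘ₗ
              PiTensorProduct.map (fun j : Fin (k + 2) => qProj mod (ts j)) ∘ₗ
              rDelta K S k with hF
            have hFx : F x = 0 := by
              rw [hF]; simp only [LinearMap.comp_apply]; rw [h0, map_zero]
            have hFone : F S.one = 0 := by
              obtain ⟨c', hc'⟩ := Submodule.mem_span_singleton.mp
                (rDelta_one S mod.delta_one k)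
              rw [hF]; simp only [LinearMap.comp_apply]
              rw [← hc', map_smul, map_smul, PiTensorProduct.map_tprod,
                tprod_eq_zero j0 (qProj_one mod (ts j0))]
              simp
            have hFne : ∀ t' : PTree, t' ≠ PTree.graft k ts →
                ∀ u : ⨂[K] _ : Fin t'.leaves, V,
                F (PiTensorProduct.lift (mod.ι t') u) = 0 := by
              intro t' hne u
              have hcomp : F ∘ₗ PiTensorProduct.lift (mod.ι t') = 0 := by
                apply PiTensorProduct.ext; apply MultilinearMap.ext; intro v'
                simp only [LinearMap.compMultilinearMap_apply, LinearMap.comp_apply,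
                  PiTensorProduct.lift.tprod, LinearMap.zero_apply,
                  MultilinearMap.zero_apply]
                rw [hF]; simp only [LinearMap.comp_apply]
                cases t' with
                | leaf => rw [rDelta_leaf mod]; simp
                | graft k' ts' =>
                  by_cases hk' : k = k'
                  · subst hk'
                    have hts' : ts' ≠ ts := fun h => hne (by rw [h])
                    rw [(rDelta_graft mod k ts' v' k).2 rfl, PiTensorProduct.map_tprod]
                    obtain ⟨j1, hj1⟩ := Function.ne_iff.mp hts'
                    rw [tprod_eq_zero j1 (qProj_ι_ne mod (Ne.symm hj1) _)]
                    simp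
                  · rw [(rDelta_graft mod k' ts' v' k).1 hk']
                    simp
              have := LinearMap.congr_fun hcomp u
              simpa using this
            have hFeq : ∀ u : ⨂[K] _ : Fin (PTree.graft k ts).leaves, V,
                F (PiTensorProduct.lift (mod.ι (PTree.graft k ts)) u) =
                  PiTensorProduct.lift (mod.ι (PTree.graft k ts)) u := by
              intro u
              have hcomp : F ∘ₗ PiTensorProduct.lift (mod.ι (PTree.graft k ts)) =
                  PiTensorProduct.lift (mod.ι (PTree.graft k ts)) := by
                apply PiTensorProduct.ext; apply MultilinearMap.ext; intro v'
                simp only [LinearMap.compMultilinearMap_apply, LinearMap.comp_apply,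
                  PiTensorProduct.lift.tprod]
                rw [hF]; simp only [LinearMap.comp_apply]
                rw [(rDelta_graft mod k ts v' k).2 rfl, PiTensorProduct.map_tprod]
                have hq : (fun j => qProj mod (ts j) (mod.ι (ts j)
                    (fun i => v' (sigmaIdx (fun j' => (ts j').leaves) j i)))) =
                    fun j => mod.ι (ts j)
                      (fun i => v' (sigmaIdx (fun j' => (ts j').leaves) j i)) := by
                  funext j; exact qProj_ι_self mod _ _
                rw [hq, PiTensorProduct.lift.tprod]
                exact mod.ι_graft k ts v'
              exact LinearMap.congr_fun hcomp u
            have hzero : PiTensorProduct.lift (mod.ι (PTree.graft k ts))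
                (w (PTree.graft k ts)) = 0 := by
              have hsum := hFx
              rw [hxw, map_add, map_smul, hFone, smul_zero, zero_add, map_sum] at hsum
              rw [Finset.sum_eq_single_of_mem (PTree.graft k ts)
                (DFinsupp.mem_support_iff.mpr hsupp)
                (fun b _ hb => hFne b hb _)] at hsum
              rw [← hFeq]; exact hsum
            exact hsupp (lift_ι_injective mod (PTree.graft k ts)
              (by rw [hzero, map_zero]))
        rw [hxw]
        refine add_mem (Submodule.mem_sup_left
          (Submodule.smul_mem _ _ (Submodule.mem_span_singleton_self _)))
          (Submodule.sum_mem _ fun t htmem => ?_)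
        refine Submodule.mem_sup_right (lift_mem t (r + 1) ?_ (w t))
        by_contra hcon
        push_neg at hcon
        exact DFinsupp.mem_support_iff.mp htmem (hw0 t hcon)
      · -- easy direction: span ≤ Fil (r+1)
        refine sup_le ?_ ?_
        · refine Submodule.span_le.mpr ?_
          intro y hy
          rw [Set.mem_singleton_iff] at hy
          subst hy
          rw [SetLike.mem_coe, mem_Fil_succ_iff]
          intro n
          obtain ⟨cc, hcc⟩ := Submodule.mem_span_singleton.mp
            (rDelta_one S mod.delta_one n)
          rw [← hcc]
          refine Submodule.smul_mem _ _ (tprod_mem_tpow fun j => ?_)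
          rw [IH]
          exact Submodule.mem_sup_left (Submodule.mem_span_singleton_self _)
        · refine Submodule.span_le.mpr ?_
          rintro y ⟨t, v, htv, rfl⟩
          rw [SetLike.mem_coe, mem_Fil_succ_iff]
          intro n
          cases t with
          | leaf => rw [rDelta_leaf mod]; exact zero_mem _
          | graft k ts =>
            by_cases hnk : n = k
            · subst hnk
              rw [(rDelta_graft mod n ts v n).2 rfl]
              refine tprod_mem_tpow fun j => ?_
              rw [IH]
              refine Submodule.mem_sup_right (Submodule.subset_span ⟨ts j, _, ?_, rfl⟩)
              have h1 : (ts j).height ≤ Finset.univ.sup (fun j => (ts j).height) :=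
                Finset.le_sup (f := fun j => (ts j).height) (Finset.mem_univ j)
              rw [PTree.height_graft] at htv
              omega
            · rw [(rDelta_graft mod k ts v n).1 hnk]
              exact zero_mem _
  refine ⟨part1, ?_⟩
  rw [eq_top_iff]
  intro x _
  obtain ⟨c, w, hxw⟩ := decomp x
  rw [hxw]
  refine add_mem (Submodule.mem_iSup_of_mem 0 ?_) (Submodule.sum_mem _ fun t _ => ?_)
  · rw [Fil_zero]
    exact Submodule.smul_mem _ _ (Submodule.mem_span_singleton_self _)
  · refine Submodule.mem_iSup_of_mem (t.height + 1) ?_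
    rw [part1]
    exact Submodule.mem_sup_right (lift_mem t _ (Nat.lt_succ_self _) (w t))

end
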